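/- arXiv:0807.0760 — 2 statements merged into one kernel-verified Lean document; each statement's English description precedes it below -/
import Mathlib

section
/- Let n ≥ 1 and let γ = ±1/2 ± √(μ² + ((n−1)/2 − p)²) where μ² ≥ (n−p)(p+1) and 0 ≤ p ≤ n. Then |γ| ≥ n/2. -/
/-- Eigenvalues `γ = ±1/2 ± √(μ² + ((n−1)/2 − p)²)` of the tangential operator `A`
satisfy `|γ| ≥ n/2`, given the Gallot–Meyer estimate `μ² ≥ (n−p)(p+1)`. -/
theorem stmt0 (n p : ℕ) (hn : 1 ≤ n) (hp : p ≤ n) (μ : ℝ)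
    (hμ : ((n : ℝ) - p) * (p + 1) ≤ μ ^ 2)
    (s₁ s₂ : ℝ) (hs₁ : s₁ = 1 ∨ s₁ = -1) (hs₂ : s₂ = 1 ∨ s₂ = -1)
    (γ : ℝ)
    (hγ : γ = s₁ * (1 / 2) + s₂ * Real.sqrt (μ ^ 2 + (((n : ℝ) - 1) / 2 - p) ^ 2)) :
    (n : ℝ) / 2 ≤ |γ| := by
  set S := Real.sqrt (μ ^ 2 + (((n : ℝ) - 1) / 2 - p) ^ 2) with hSdef
  have hn1 : (1 : ℝ) ≤ (n : ℝ) := by exact_mod_cast hn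
  have hkey : (((n : ℝ) + 1) / 2) ^ 2 ≤ μ ^ 2 + (((n : ℝ) - 1) / 2 - p) ^ 2 := by
    nlinarith [hμ]
  have hS : ((n : ℝ) + 1) / 2 ≤ S := by
    have := Real.sqrt_le_sqrt hkey
    rwa [Real.sqrt_sq (by positivity)] at this
  rcases hs₁ with rfl | rfl <;> rcases hs₂ with rfl | rfl <;> subst hγ
  · have := le_abs_self (1 * (1 / 2) + 1 * S); linarith
  · have := neg_abs_le (1 * (1 / 2) + -1 * S); linarith
  · have := le_abs_self (-1 * (1 / 2) + 1 * S); linarith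
  · have := neg_abs_le (-1 * (1 / 2) + -1 * S); linarith
end

section
/- Let σ : [ε,1] → H be a C¹ curve in a Hilbert space with ∫_ε^1 |σ'(r) + (1/r) A σ(r)|² dr ≤ Λ and ∫_ε^1 |σ(r)|² dr ≤ 1, where A is self-adjoint with spectrum in (−∞, −n/2]. Then for every r ∈ [ε,1], (1/r)⟨σ(r), −Aσ(r)⟩ ≤ Λ whenever σ(1) = 0 and ⟨σ, (A+A²)σ⟩ ≥ 0 pointwise. -/
open RealInnerProductSpace intervalIntegral

/- The proof integrates by parts against `g r = r⁻¹ ⟪σ r, A (σ r)⟫`. Pointwise,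
`‖σ' + r⁻¹ A σ‖² = ‖σ'‖² + r⁻²⟪σ, (A + A²) σ⟫ + g'`, and the first two terms are nonnegative,
so `∫_r^1 ‖σ' + r⁻¹ A σ‖² ≥ g 1 - g r = -g r` because `σ 1 = 0`. Enlarging the interval to
`[ε, 1]` only increases the integral of the nonnegative integrand, which is at most `Λ`. -/

section

variable {H : Type*} [NormedAddCommGroup H] [InnerProductSpace ℝ H]

theorem LinearMap.IsSymmetric.inner_sub_le_norm_add_smul_sq {T : H →ₗ[ℝ] H}
    (hT : T.IsSymmetric) {x : H} (hx : 0 ≤ ⟪x, T x + T (T x)⟫) (v : H) (t : ℝ) :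
    -t ^ 2 * ⟪x, T x⟫ + t * (2 * ⟪v, T x⟫) ≤ ‖v + t • T x‖ ^ 2 := by
  have hTT : ‖T x‖ ^ 2 = ⟪x, T (T x)⟫ := by rw [← real_inner_self_eq_norm_sq, hT]
  -- the gap is `‖v‖² + t²⟪x, (T + T²) x⟫`
  have hexpand : ‖v + t • T x‖ ^ 2 = ‖v‖ ^ 2 + 2 * t * ⟪v, T x⟫ + t ^ 2 * ⟪x, T (T x)⟫ := by
    rw [norm_add_sq_real, norm_smul, mul_pow, Real.norm_eq_abs, sq_abs, hTT,
      real_inner_smul_right]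
    ring
  rw [inner_add_right] at hx
  nlinarith [sq_nonneg ‖v‖, mul_nonneg (sq_nonneg t) hx]

theorem HasDerivAt.inv_mul_inner_apply_self {A : H →L[ℝ] H} (hA : (A : H →ₗ[ℝ] H).IsSymmetric)
    {σ : ℝ → H} {σ' : H} {r : ℝ} (hσ : HasDerivAt σ σ' r) (hr : r ≠ 0) :
    HasDerivAt (fun s => s⁻¹ * ⟪σ s, A (σ s)⟫)
      (-(r ^ 2)⁻¹ * ⟪σ r, A (σ r)⟫ + r⁻¹ * (2 * ⟪σ', A (σ r)⟫)) r := by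
  have hinner := hσ.inner ℝ (A.hasFDerivAt.comp_hasDerivAt r hσ)
  refine ((hasDerivAt_inv hr).mul hinner).congr_deriv ?_
  simp only [Function.comp_apply]
  have hsymm : ⟪σ r, A σ'⟫ = ⟪σ', A (σ r)⟫ := by rw [real_inner_comm]; exact hA σ' (σ r)
  rw [hsymm]
  ring

theorem ContinuousOn.norm_add_inv_smul_apply_sq {A : H →L[ℝ] H} {σ σ' : ℝ → H} {s : Set ℝ}
    (hσ : ContinuousOn σ s) (hσ' : ContinuousOn σ' s) (hs : (0 : ℝ) ∉ s) :
    ContinuousOn (fun r => ‖σ' r + r⁻¹ • A (σ r)‖ ^ 2) s := by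
  have hinv : ContinuousOn (fun r : ℝ => r⁻¹) s :=
    continuousOn_inv₀.mono fun r hr hr0 => hs (hr0 ▸ hr)
  fun_prop

theorem neg_inv_mul_inner_apply_self_le_integral {A : H →L[ℝ] H}
    (hA : (A : H →ₗ[ℝ] H).IsSymmetric) (hpos : ∀ x : H, 0 ≤ ⟪x, A x + A (A x)⟫)
    {σ σ' : ℝ → H} {a b : ℝ} (ha : 0 < a) (hab : a ≤ b)
    (hderiv : ∀ r ∈ Set.Icc a b, HasDerivAt σ (σ' r) r) (hcont : ContinuousOn σ' (Set.Icc a b))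
    (hb : σ b = 0) :
    -(a⁻¹ * ⟪σ a, A (σ a)⟫) ≤ ∫ r in a..b, ‖σ' r + r⁻¹ • A (σ r)‖ ^ 2 := by
  have h0 : (0 : ℝ) ∉ Set.Icc a b := fun h => ha.not_ge h.1
  have hI : Set.uIcc a b = Set.Icc a b := Set.uIcc_of_le hab
  have hσ : ContinuousOn σ (Set.Icc a b) :=
    fun r hr => (hderiv r hr).continuousAt.continuousWithinAt
  have hinv : ContinuousOn (fun r : ℝ => r⁻¹) (Set.Icc a b) :=
    continuousOn_inv₀.mono fun r hr hr0 => h0 (hr0 ▸ hr)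
  have hinv2 : ContinuousOn (fun r : ℝ => (r ^ 2)⁻¹) (Set.Icc a b) :=
    (hinv.pow 2).congr fun r _ => (inv_pow r 2).symm
  have hg : ∀ r ∈ Set.uIcc a b, HasDerivAt (fun s => s⁻¹ * ⟪σ s, A (σ s)⟫)
      (-(r ^ 2)⁻¹ * ⟪σ r, A (σ r)⟫ + r⁻¹ * (2 * ⟪σ' r, A (σ r)⟫)) r := fun r hr => by
    rw [hI] at hr
    exact (hderiv r hr).inv_mul_inner_apply_self hA (ne_of_mem_of_not_mem hr h0)
  have hg' : IntervalIntegrable (fun r => -(r ^ 2)⁻¹ * ⟪σ r, A (σ r)⟫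
      + r⁻¹ * (2 * ⟪σ' r, A (σ r)⟫)) MeasureTheory.volume a b :=
    ContinuousOn.intervalIntegrable (hI ▸ by fun_prop)
  have hf : IntervalIntegrable (fun r => ‖σ' r + r⁻¹ • A (σ r)‖ ^ 2) MeasureTheory.volume a b :=
    (hI ▸ hσ.norm_add_inv_smul_apply_sq hcont h0).intervalIntegrable
  calc -(a⁻¹ * ⟪σ a, A (σ a)⟫)
      = ∫ r in a..b, (-(r ^ 2)⁻¹ * ⟪σ r, A (σ r)⟫ + r⁻¹ * (2 * ⟪σ' r, A (σ r)⟫)) := by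
        rw [integral_eq_sub_of_hasDerivAt hg hg', hb]
        simp
    _ ≤ ∫ r in a..b, ‖σ' r + r⁻¹ • A (σ r)‖ ^ 2 := by
        refine integral_mono_on hab hg' hf fun r _ => ?_
        rw [← inv_pow]
        exact hA.inner_sub_le_norm_add_smul_sq (hpos (σ r)) (σ' r) r⁻¹

end

theorem stmt9_general {H : Type*} [NormedAddCommGroup H] [InnerProductSpace ℝ H] [CompleteSpace H]
    (A : H →L[ℝ] H) (hA : IsSelfAdjoint A)
    (ε Λ : ℝ) (hε : 0 < ε)
    (σ σ' : ℝ → H)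
    (hderiv : ∀ r ∈ Set.Icc ε 1, HasDerivAt σ (σ' r) r)
    (hcont : ContinuousOn σ' (Set.Icc ε 1))
    (hq : ∫ r in ε..1, ‖σ' r + (1 / r) • A (σ r)‖ ^ 2 ≤ Λ)
    (hb : σ 1 = 0)
    (hpos : ∀ x : H, 0 ≤ ⟪x, A x + A (A x)⟫) :
    ∀ r ∈ Set.Icc ε 1, (1 / r) * ⟪σ r, -A (σ r)⟫ ≤ Λ := by
  intro r hr
  have hσ : ContinuousOn σ (Set.Icc ε 1) :=
    fun s hs => (hderiv s hs).continuousAt.continuousWithinAt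
  have hf : ContinuousOn (fun s => ‖σ' s + s⁻¹ • A (σ s)‖ ^ 2) (Set.Icc ε 1) :=
    hσ.norm_add_inv_smul_apply_sq hcont fun h => hε.not_ge h.1
  simp only [one_div] at hq ⊢
  calc r⁻¹ * ⟪σ r, -A (σ r)⟫ = -(r⁻¹ * ⟪σ r, A (σ r)⟫) := by rw [inner_neg_right, mul_neg]
    _ ≤ ∫ s in r..1, ‖σ' s + s⁻¹ • A (σ s)‖ ^ 2 :=
      neg_inv_mul_inner_apply_self_le_integral hA.isSymmetric hpos (hε.trans_le hr.1) hr.2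
        (fun s hs => hderiv s ⟨hr.1.trans hs.1, hs.2⟩)
        (hcont.mono (Set.Icc_subset_Icc_left hr.1)) hb
    _ ≤ ∫ s in ε..1, ‖σ' s + s⁻¹ • A (σ s)‖ ^ 2 :=
      integral_mono_interval hr.1 hr.2 le_rfl (Filter.Eventually.of_forall fun _ => sq_nonneg _)
        (hf.intervalIntegrable_of_Icc (hr.1.trans hr.2))
    _ ≤ Λ := hq

/-- Boundary control for a curve in a Hilbert space: if `A` is self-adjoint with
quadratic form `⟪Ax,x⟫ ≤ −(n/2)‖x‖²` (spectrum in `(−∞, −n/2]`),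
`∫_ε^1 ‖σ' + (1/r)Aσ‖² ≤ Λ`, `∫_ε^1 ‖σ‖² ≤ 1`, `σ(1) = 0` and
`⟪σ, (A+A²)σ⟫ ≥ 0` pointwise, then `(1/r)⟪σ(r), −Aσ(r)⟫ ≤ Λ` on `[ε,1]`. -/
theorem stmt9 {H : Type*} [NormedAddCommGroup H] [InnerProductSpace ℝ H] [CompleteSpace H]
    (A : H →L[ℝ] H) (hA : IsSelfAdjoint A) (n : ℕ) (hn : 1 ≤ n)
    (hspec : ∀ x : H, ⟪A x, x⟫ ≤ -((n : ℝ) / 2) * ‖x‖ ^ 2)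
    (ε Λ : ℝ) (hε : 0 < ε) (hε1 : ε < 1)
    (σ σ' : ℝ → H)
    (hderiv : ∀ r ∈ Set.Icc ε 1, HasDerivAt σ (σ' r) r)
    (hcont : ContinuousOn σ' (Set.Icc ε 1))
    (hq : ∫ r in ε..1, ‖σ' r + (1 / r) • A (σ r)‖ ^ 2 ≤ Λ)
    (hL2 : ∫ r in ε..1, ‖σ r‖ ^ 2 ≤ 1)
    (hb : σ 1 = 0)
    (hpos : ∀ x : H, 0 ≤ ⟪x, A x + A (A x)⟫) :
    ∀ r ∈ Set.Icc ε 1, (1 / r) * ⟪σ r, -A (σ r)⟫ ≤ Λ :=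
  stmt9_general A hA ε Λ hε σ σ' hderiv hcont hq hb hpos
end
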